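/- Assume Υ(k) ≥ 32 and APT ≥ 1. Let A_1,…,A_k be a partition of V whose k-means cost satisfies COST(A_1,…,A_k) ≤ APT·k/Υ(k). Let σ: [k] → [k] be any function with σ(i) ∈ argmin_{j∈[k]} ‖p^(j) − c_i‖ for every i, and for i ∈ [k] set M_{σ,i} = ∪_{j : σ(j) = i} A_j. Then Σ_{i=1}^k vol(M_{σ,i} △ S_i)/vol(S_i) ≤ 64·(1+APT)·k/Υ(k), where △ denotes symmetric difference. -/

import Mathlib

open Finset
open scoped RealInnerProductSpace

/-- The volume of a vertex set: the sum of the degrees of its vertices. -/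
noncomputable def gVol {V : Type*} (deg : V → ℝ) (S : Finset V) : ℝ := ∑ u ∈ S, deg u

/-- The total edge weight between two vertex sets. -/
noncomputable def gCut {V : Type*} (w : V → V → ℝ) (A B : Finset V) : ℝ :=
  ∑ u ∈ A, ∑ v ∈ B, w u v

/-- The conductance of a vertex set. -/
noncomputable def gCond {V : Type*} [Fintype V] [DecidableEq V]
    (w : V → V → ℝ) (deg : V → ℝ) (S : Finset V) : ℝ :=
  gCut w S Sᶜ / min (gVol deg S) (gVol deg Sᶜ)

/-- `S : Fin k → Finset V` is a partition of `V` into `k` non-empty sets. -/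
def IsPartition {V : Type*} [Fintype V] {k : ℕ} (S : Fin k → Finset V) : Prop :=
  (∀ i, (S i).Nonempty) ∧ (∀ i j, i ≠ j → Disjoint (S i) (S j)) ∧ ∀ v, ∃ i, v ∈ S i

/-- The vector `D^{1/2} χ_S`. -/
noncomputable def indVec {n : ℕ} (deg : Fin n → ℝ) (S : Finset (Fin n)) :
    EuclideanSpace ℝ (Fin n) :=
  WithLp.toLp 2 (fun v => if v ∈ S then Real.sqrt (deg v) else 0)

/-- The normalised indicator vector `D^{1/2} χ_S / ‖D^{1/2} χ_S‖` of a cluster `S`. -/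
noncomputable def gbarVec {n : ℕ} (deg : Fin n → ℝ) (S : Finset (Fin n)) :
    EuclideanSpace ℝ (Fin n) :=
  ‖indVec deg S‖⁻¹ • indVec deg S

/-- The degree-weighted centre of the embedded points of a cluster. -/
noncomputable def kmCentre {n d : ℕ} (deg : Fin n → ℝ)
    (F : Fin n → EuclideanSpace ℝ (Fin d)) (A : Finset (Fin n)) :
    EuclideanSpace ℝ (Fin d) :=
  (gVol deg A)⁻¹ • ∑ u ∈ A, deg u • F u

/-- The degree-weighted `k`-means cost of a partition in the spectral embedding. -/
noncomputable def kmCost {n d k : ℕ} (deg : Fin n → ℝ)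
    (F : Fin n → EuclideanSpace ℝ (Fin d)) (A : Fin k → Finset (Fin n)) : ℝ :=
  ∑ i, ∑ u ∈ A i, deg u * ‖F u - kmCentre deg F (A i)‖ ^ 2

/-!
Expand each normalised indicator vector `ḡ_i` in the eigenbasis `f`. Its Rayleigh quotient is
`w(S_i, V ∖ S_i) / vol(S_i) ≤ ρ(k)`, and `N` is positive semidefinite, so the weight of `ḡ_i` on
the eigenvectors `f_j` with `j > k` is at most `ρ(k) / λ_{k+1} = 1/Υ`. The leading `k` coordinates
of the `ḡ_i` are therefore nearly orthonormal. This gives two facts: the approximate centres are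
well separated, `‖p^(i) - p^(j)‖² ≥ (1 - 2/Υ)(1/vol S_i + 1/vol S_j)`, and the embedded vertices
lie close to the centre of their own cluster, `∑_i ∑_{u ∈ S_i} deg(u) ‖F(u) - p^(i)‖² ≤ k/Υ`.

A vertex `u ∈ A_j ∩ S_i` lies in some symmetric difference only if `σ(j) ≠ i`, and then it
contributes `deg(u) (1/vol S_i + 1/vol S_σ(j))`. Since `p^(σ(j))` is at least as close to `c_j`
as `p^(i)`, the triangle inequality gives `‖p^(i) - p^(σ(j))‖ ≤ 2 (‖F(u) - c_j‖ + ‖F(u) - p^(i)‖)`.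
Separation then bounds the contribution by `16 deg(u) (‖F(u) - c_j‖² + ‖F(u) - p^(i)‖²)`, and
summing over `u` gives `16 (APT + 1) k / Υ`.
-/

theorem Orthonormal.exists_orthonormalBasis_eq {ι 𝕜 E : Type*} [RCLike 𝕜] [NormedAddCommGroup E]
    [InnerProductSpace 𝕜 E] [FiniteDimensional 𝕜 E] [Fintype ι] {v : ι → E}
    (hv : Orthonormal 𝕜 v) (hcard : Fintype.card ι = Module.finrank 𝕜 E) :
    ∃ b : OrthonormalBasis ι 𝕜 E, ⇑b = v :=
  ⟨.mk hv (hv.linearIndependent.span_eq_top_of_card_eq_finrank' hcard).ge,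
    OrthonormalBasis.coe_mk _ _⟩

theorem sum_castLE_add_sum_Ici {M : Type*} [AddCommMonoid M] {n k : ℕ} (hkn : k < n)
    (g : Fin n → M) :
    ∑ j : Fin k, g (Fin.castLE hkn.le j) + ∑ j ∈ Ici ⟨k, hkn⟩, g j = ∑ j, g j := by
  have hhead : univ.map (Fin.castLEEmb hkn.le) = Iio ⟨k, hkn⟩ := by
    ext j
    simp only [mem_map, mem_univ, true_and, Fin.castLEEmb_apply, mem_Iio, Fin.lt_def]
    exact ⟨fun ⟨i, hi⟩ => hi ▸ i.isLt, fun hj => ⟨⟨j, hj⟩, rfl⟩⟩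
  have hdisj : Disjoint (Iio (⟨k, hkn⟩ : Fin n)) (Ici ⟨k, hkn⟩) :=
    disjoint_left.mpr fun j hj hj' => (mem_Iio.mp hj).not_ge (mem_Ici.mp hj')
  rw [show ∑ j : Fin k, g (Fin.castLE hkn.le j) = ∑ j ∈ univ.map (Fin.castLEEmb hkn.le), g j by
    rw [sum_map]; rfl, hhead, ← sum_union hdisj]
  exact sum_congr (by ext j; simp [lt_or_ge]) fun _ _ => rfl

theorem sum_Ici_le_sum_mul_div {ι : Type*} [Fintype ι] [Preorder ι] [LocallyFiniteOrderTop ι]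
    {lam c : ι → ℝ} (hlam : Monotone lam) (hlam0 : ∀ j, 0 ≤ lam j) (hc : ∀ j, 0 ≤ c j) {a : ι}
    (ha : 0 < lam a) : ∑ j ∈ Ici a, c j ≤ (∑ j, lam j * c j) / lam a := by
  rw [le_div_iff₀ ha, sum_mul]
  calc ∑ j ∈ Ici a, c j * lam a
      ≤ ∑ j ∈ Ici a, lam j * c j :=
        sum_le_sum fun j hj => by
          rw [mul_comm]; exact mul_le_mul_of_nonneg_right (hlam (mem_Ici.mp hj)) (hc j)
    _ ≤ ∑ j, lam j * c j :=
        sum_le_sum_of_subset_of_nonneg (subset_univ _) fun j _ _ => mul_nonneg (hlam0 j) (hc j)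

section Labels

variable {V ι : Type*} [Fintype V] [Fintype ι] [DecidableEq ι]

theorem IsPartition.exists_label {k : ℕ} {S : Fin k → Finset V} (hS : IsPartition S) :
    ∃ l : V → Fin k, ∀ u i, u ∈ S i ↔ l u = i := by
  choose l hl using hS.2.2
  refine ⟨l, fun u i => ⟨fun hu => ?_, by rintro rfl; exact hl u⟩⟩
  by_contra hne
  exact disjoint_left.mp (hS.2.1 i (l u) (Ne.symm hne)) hu (hl u)

theorem sum_sum_eq_sum_label {M : Type*} [AddCommMonoid M] {S : ι → Finset V} {l : V → ι}
    (hl : ∀ u i, u ∈ S i ↔ l u = i) (g : ι → V → M) :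
    ∑ i, ∑ u ∈ S i, g i u = ∑ u, g (l u) u := by
  rw [← sum_fiberwise univ l fun u => g (l u) u]
  refine sum_congr rfl fun i _ => ?_
  rw [show S i = univ.filter (l · = i) by ext u; simp [hl]]
  exact sum_congr rfl fun u hu => by rw [(mem_filter.mp hu).2]

theorem sum_vol_symmDiff_div_le [DecidableEq V] {deg : V → ℝ} {M S : ι → Finset V}
    {m s : V → ι} (hM : ∀ u i, u ∈ M i ↔ m u = i) (hS : ∀ u i, u ∈ S i ↔ s u = i)
    (vol : ι → ℝ) (E : V → ℝ) (hE0 : ∀ u, 0 ≤ E u)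
    (hE : ∀ u, m u ≠ s u → deg u / vol (m u) + deg u / vol (s u) ≤ E u) :
    ∑ i, gVol deg (symmDiff (M i) (S i)) / vol i ≤ ∑ u, E u := by
  have hterm : ∀ i, gVol deg (symmDiff (M i) (S i)) / vol i =
      ∑ u, if u ∈ symmDiff (M i) (S i) then deg u / vol i else 0 := fun i => by
    rw [gVol, sum_div, sum_ite_mem, univ_inter]
  simp_rw [hterm]
  rw [sum_comm]
  refine sum_le_sum fun u _ => ?_
  by_cases hms : m u = s u
  · have hnot : ∀ i, u ∉ symmDiff (M i) (S i) := fun i => by simp [mem_symmDiff, hM, hS, hms]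
    simp [hnot, hE0 u]
  · have hsplit : ∀ i, (if u ∈ symmDiff (M i) (S i) then deg u / vol i else 0) =
        (if m u = i then deg u / vol i else 0) + (if s u = i then deg u / vol i else 0) := by
      intro i
      simp only [mem_symmDiff, hM, hS]
      split_ifs <;> simp_all
    simp_rw [hsplit]
    rw [sum_add_distrib, sum_ite_eq, sum_ite_eq]
    simpa using hE u hms

end Labels

theorem sq_norm_sub_le_of_norm_sub_le {E : Type*} [SeminormedAddCommGroup E] (x c p q : E)
    (h : ‖q - c‖ ≤ ‖p - c‖) : ‖p - q‖ ^ 2 ≤ 8 * (‖x - c‖ ^ 2 + ‖x - p‖ ^ 2) := by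
  have hpq : ‖p - q‖ ≤ 2 * (‖x - c‖ + ‖x - p‖) := by
    have h₁ := norm_sub_le_norm_sub_add_norm_sub p c q
    have h₂ := norm_sub_le_norm_sub_add_norm_sub p x c
    rw [norm_sub_rev c q] at h₁
    rw [norm_sub_rev p x] at h₂
    linarith
  nlinarith [norm_nonneg (p - q), sq_nonneg (‖x - c‖ - ‖x - p‖)]

theorem mul_sq_add_sq_le_norm_smul_sub_smul_sq {E : Type*} [NormedAddCommGroup E]
    [InnerProductSpace ℝ E] {a b : E} {x y ε : ℝ} (hx : 0 ≤ x) (hy : 0 ≤ y) (hε : 0 ≤ ε)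
    (ha : 1 - ε ≤ ‖a‖ ^ 2) (hb : 1 - ε ≤ ‖b‖ ^ 2) (hab : ⟪a, b⟫ ≤ ε) :
    (1 - 2 * ε) * (x ^ 2 + y ^ 2) ≤ ‖x • a - y • b‖ ^ 2 := by
  rw [norm_sub_sq_real, norm_smul, norm_smul, real_inner_smul_left, real_inner_smul_right,
    Real.norm_of_nonneg hx, Real.norm_of_nonneg hy]
  nlinarith [mul_le_mul_of_nonneg_left hab (mul_nonneg hx hy),
    mul_le_mul_of_nonneg_left ha (sq_nonneg x), mul_le_mul_of_nonneg_left hb (sq_nonneg y),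
    mul_nonneg hε (sq_nonneg (x - y))]

theorem sum_vol_symmDiff_div_le_of_separated {V ι E : Type*} [Fintype V] [Fintype ι]
    [DecidableEq V] [DecidableEq ι] [SeminormedAddCommGroup E] {deg : V → ℝ}
    (hdeg : ∀ u, 0 ≤ deg u) {vol : ι → ℝ} {ε : ℝ} (hε : ε ≤ 1 / 4) {p c : ι → E}
    (hsep : ∀ i j, i ≠ j → (1 - 2 * ε) * ((vol i)⁻¹ + (vol j)⁻¹) ≤ ‖p i - p j‖ ^ 2)
    {σ : ι → ι} (hσ : ∀ i j, ‖p (σ i) - c i‖ ≤ ‖p j - c i‖) {A S M : ι → Finset V}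
    {a s : V → ι} (hA : ∀ u i, u ∈ A i ↔ a u = i) (hS : ∀ u i, u ∈ S i ↔ s u = i)
    (hM : ∀ i, M i = (univ.filter (σ · = i)).biUnion A) (F : V → E) :
    ∑ i, gVol deg (symmDiff (M i) (S i)) / vol i ≤
      16 * (∑ u, deg u * ‖F u - c (a u)‖ ^ 2 + ∑ u, deg u * ‖F u - p (s u)‖ ^ 2) := by
  have hM' : ∀ u i, u ∈ M i ↔ σ (a u) = i := fun u i => by simp [hM, hA]
  rw [← sum_add_distrib, mul_sum]
  refine sum_vol_symmDiff_div_le hM' hS vol _ (fun u => by have := hdeg u; positivity)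
    fun u hne => ?_
  have hsep' := hsep (s u) (σ (a u)) (Ne.symm hne)
  have hgeo := sq_norm_sub_le_of_norm_sub_le (F u) (c (a u)) (p (s u)) (p (σ (a u)))
    (hσ (a u) (s u))
  have hinv : (vol (s u))⁻¹ + (vol (σ (a u)))⁻¹ ≤
      16 * (‖F u - c (a u)‖ ^ 2 + ‖F u - p (s u)‖ ^ 2) := by
    rcases le_or_gt 0 ((vol (s u))⁻¹ + (vol (σ (a u)))⁻¹) with ht | ht
    · nlinarith [mul_nonneg (sub_nonneg.2 hε) ht]
    · nlinarith [norm_nonneg (F u - c (a u)), norm_nonneg (F u - p (s u))]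
  calc deg u / vol (σ (a u)) + deg u / vol (s u)
      = deg u * ((vol (s u))⁻¹ + (vol (σ (a u)))⁻¹) := by ring
    _ ≤ deg u * (16 * (‖F u - c (a u)‖ ^ 2 + ‖F u - p (s u)‖ ^ 2)) :=
      mul_le_mul_of_nonneg_left hinv (hdeg u)
    _ = 16 * (deg u * ‖F u - c (a u)‖ ^ 2 + deg u * ‖F u - p (s u)‖ ^ 2) := by ring

noncomputable def normalizedLaplacian {V : Type*} [DecidableEq V] (w : V → V → ℝ)
    (deg : V → ℝ) : Matrix V V ℝ :=
  Matrix.of fun u v => (if u = v then 1 else 0) - w u v / (Real.sqrt (deg u) * Real.sqrt (deg v))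

theorem gVol_pos {V : Type*} {deg : V → ℝ} (hdegpos : ∀ u, 0 < deg u) {S : Finset V}
    (hS : S.Nonempty) : 0 < gVol deg S :=
  sum_pos (fun u _ => hdegpos u) hS

theorem gCut_comm {V : Type*} {w : V → V → ℝ} (hsymm : ∀ u v, w u v = w v u)
    (A B : Finset V) : gCut w A B = gCut w B A := by
  rw [gCut, gCut, sum_comm]
  simp_rw [hsymm]

section Graph

variable {V : Type*} [Fintype V] [DecidableEq V] {w : V → V → ℝ} {deg : V → ℝ}

theorem two_mul_dotProduct_normalizedLaplacian_mulVec (hsymm : ∀ u v, w u v = w v u)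
    (hdeg : ∀ u, deg u = ∑ v, w u v) (hdegpos : ∀ u, 0 < deg u) (x : V → ℝ) :
    2 * (x ⬝ᵥ (normalizedLaplacian w deg).mulVec x) =
      ∑ u, ∑ v, w u v * (x u / Real.sqrt (deg u) - x v / Real.sqrt (deg v)) ^ 2 := by
  set y : V → ℝ := fun u => x u / Real.sqrt (deg u)
  have hsqrt : ∀ u, Real.sqrt (deg u) ≠ 0 := fun u => (Real.sqrt_pos.mpr (hdegpos u)).ne'
  have hx : ∀ u, x u = Real.sqrt (deg u) * y u := fun u => (mul_div_cancel₀ (x u) (hsqrt u)).symm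
  have hdy : ∀ u, deg u * y u ^ 2 = x u ^ 2 := fun u => by
    rw [hx u, mul_pow, Real.sq_sqrt (hdegpos u).le]
  have hquad : x ⬝ᵥ (normalizedLaplacian w deg).mulVec x =
      ∑ u, x u ^ 2 - ∑ u, ∑ v, w u v * y u * y v := by
    simp only [dotProduct, Matrix.mulVec, mul_sum, ← sum_sub_distrib]
    refine sum_congr rfl fun u _ => ?_
    rw [show x u ^ 2 = ∑ v, if u = v then x u * x v else 0 by simp [sq], ← sum_sub_distrib]
    refine sum_congr rfl fun v _ => ?_
    have hu := hsqrt u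
    have hv := hsqrt v
    rw [normalizedLaplacian, Matrix.of_apply, hx u, hx v]
    split_ifs with huv
    · subst huv; field_simp
    · field_simp; ring
  have hrow : ∑ u, ∑ v, w u v * y u ^ 2 = ∑ u, x u ^ 2 :=
    sum_congr rfl fun u _ => by rw [← sum_mul, ← hdeg, hdy]
  have hcol : ∑ u, ∑ v, w u v * y v ^ 2 = ∑ u, x u ^ 2 := by
    rw [sum_comm]
    exact sum_congr rfl fun v _ => by simp_rw [hsymm _ v]; rw [← sum_mul, ← hdeg, hdy]
  calc 2 * (x ⬝ᵥ (normalizedLaplacian w deg).mulVec x)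
      = ∑ u, ∑ v, w u v * y u ^ 2 + ∑ u, ∑ v, w u v * y v ^ 2
          - 2 * ∑ u, ∑ v, w u v * y u * y v := by rw [hquad, hrow, hcol]; ring
    _ = ∑ u, ∑ v, w u v * (y u - y v) ^ 2 := by
      simp only [mul_sum, ← sum_add_distrib, ← sum_sub_distrib]
      exact sum_congr rfl fun u _ => sum_congr rfl fun v _ => by ring

theorem dotProduct_normalizedLaplacian_mulVec_nonneg (hsymm : ∀ u v, w u v = w v u)
    (hnonneg : ∀ u v, 0 ≤ w u v) (hdeg : ∀ u, deg u = ∑ v, w u v) (hdegpos : ∀ u, 0 < deg u)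
    (x : V → ℝ) : 0 ≤ x ⬝ᵥ (normalizedLaplacian w deg).mulVec x := by
  have h := two_mul_dotProduct_normalizedLaplacian_mulVec hsymm hdeg hdegpos x
  have : 0 ≤ ∑ u, ∑ v, w u v * (x u / Real.sqrt (deg u) - x v / Real.sqrt (deg v)) ^ 2 :=
    sum_nonneg fun u _ => sum_nonneg fun v _ => mul_nonneg (hnonneg u v) (sq_nonneg _)
  linarith

theorem sum_sum_mul_indicator_sub_sq (hsymm : ∀ u v, w u v = w v u) (S : Finset V) :
    ∑ u, ∑ v, w u v * ((if u ∈ S then 1 else 0) - (if v ∈ S then 1 else 0)) ^ 2 =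
      2 * gCut w S Sᶜ := by
  rw [← sum_add_sum_compl S, two_mul]
  nth_rewrite 2 [gCut_comm hsymm]
  congr 1 <;> refine sum_congr rfl fun u hu => ?_ <;> rw [← sum_add_sum_compl S]
  · rw [sum_eq_zero fun v hv => by simp [hu, hv], zero_add]
    exact sum_congr rfl fun v hv => by simp [hu, mem_compl.mp hv]
  · rw [sum_eq_zero (s := Sᶜ) fun v hv => by simp [mem_compl.mp hu, mem_compl.mp hv], add_zero]
    exact sum_congr rfl fun v hv => by simp [mem_compl.mp hu, hv]

theorem gCut_div_gVol_le_gCond (hnonneg : ∀ u v, 0 ≤ w u v) (hdegpos : ∀ u, 0 < deg u)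
    {S : Finset V} (hS : S.Nonempty) : gCut w S Sᶜ / gVol deg S ≤ gCond w deg S := by
  rcases Sᶜ.eq_empty_or_nonempty with hSc | hSc
  · simp [gCond, gCut, hSc]
  · exact div_le_div_of_nonneg_left (sum_nonneg fun u _ => sum_nonneg fun v _ => hnonneg u v)
      (lt_min (gVol_pos hdegpos hS) (gVol_pos hdegpos hSc)) (min_le_left _ _)

end Graph

section IndicatorVector

variable {n : ℕ} {deg : Fin n → ℝ}

theorem norm_indVec (hdeg : ∀ u, 0 ≤ deg u) (S : Finset (Fin n)) :
    ‖indVec deg S‖ = Real.sqrt (gVol deg S) := by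
  rw [EuclideanSpace.norm_eq, gVol, ← sum_add_sum_compl S, sum_eq_zero (s := Sᶜ), add_zero]
  · exact congrArg _ (sum_congr rfl fun u hu => by simp [indVec, hu, Real.sq_sqrt (hdeg u)])
  · exact fun u hu => by simp [indVec, mem_compl.mp hu]

theorem gbarVec_apply (hdeg : ∀ u, 0 ≤ deg u) (S : Finset (Fin n)) (u : Fin n) :
    gbarVec deg S u = if u ∈ S then Real.sqrt (deg u) / Real.sqrt (gVol deg S) else 0 := by
  rw [gbarVec, PiLp.smul_apply, norm_indVec hdeg, smul_eq_mul, indVec]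
  split_ifs with hu <;> simp [hu, div_eq_inv_mul]

theorem orthonormal_gbarVec (hdegpos : ∀ u, 0 < deg u) {k : ℕ} {S : Fin k → Finset (Fin n)}
    (hS : IsPartition S) : Orthonormal ℝ fun i => gbarVec deg (S i) := by
  have hind : ∀ i, indVec deg (S i) ≠ 0 := fun i => by
    rw [← norm_ne_zero_iff, norm_indVec fun u => (hdegpos u).le]
    exact (Real.sqrt_pos.mpr (gVol_pos hdegpos (hS.1 i))).ne'
  refine ⟨fun i => norm_smul_inv_norm (hind i), fun i j hij => ?_⟩
  have horth : ⟪indVec deg (S i), indVec deg (S j)⟫ = 0 := by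
    refine sum_eq_zero fun u _ => ?_
    by_cases hu : u ∈ S i
    · simp [indVec, disjoint_left.mp (hS.2.1 i j hij) hu]
    · simp [indVec, hu]
  simp [gbarVec, real_inner_smul_left, real_inner_smul_right, horth]

theorem gbarVec_dotProduct_normalizedLaplacian_mulVec {w : Fin n → Fin n → ℝ}
    (hsymm : ∀ u v, w u v = w v u) (hdeg : ∀ u, deg u = ∑ v, w u v) (hdegpos : ∀ u, 0 < deg u)
    (S : Finset (Fin n)) :
    gbarVec deg S ⬝ᵥ (normalizedLaplacian w deg).mulVec (gbarVec deg S) =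
      gCut w S Sᶜ / gVol deg S := by
  have hscaled : ∀ u, gbarVec deg S u / Real.sqrt (deg u) =
      (if u ∈ S then 1 else 0) / Real.sqrt (gVol deg S) := fun u => by
    rw [gbarVec_apply fun v => (hdegpos v).le]
    split_ifs
    · rw [div_right_comm, div_self (Real.sqrt_pos.mpr (hdegpos u)).ne']
    · simp
  have hvol : 0 ≤ gVol deg S := sum_nonneg fun u _ => (hdegpos u).le
  have h := two_mul_dotProduct_normalizedLaplacian_mulVec hsymm hdeg hdegpos (gbarVec deg S)
  simp_rw [hscaled, ← sub_div, div_pow, Real.sq_sqrt hvol, mul_div_assoc', ← sum_div,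
    sum_sum_mul_indicator_sub_sq hsymm, mul_div_assoc] at h
  linarith

theorem sum_deg_mul_sub_sq_eq (hdegpos : ∀ u, 0 < deg u) {S : Finset (Fin n)}
    (hS : S.Nonempty) (x : EuclideanSpace ℝ (Fin n)) :
    ∑ u ∈ S, deg u * (x u / Real.sqrt (deg u) - ⟪x, gbarVec deg S⟫ / Real.sqrt (gVol deg S)) ^ 2
      = ∑ u ∈ S, x u ^ 2 - ⟪x, gbarVec deg S⟫ ^ 2 := by
  set s := Real.sqrt (gVol deg S)
  set α := ⟪x, gbarVec deg S⟫
  have hs : 0 < s := Real.sqrt_pos.mpr (gVol_pos hdegpos hS)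
  have hvol : ∑ u ∈ S, deg u = s ^ 2 := (Real.sq_sqrt (gVol_pos hdegpos hS).le).symm
  have hcorr : ∑ u ∈ S, x u * Real.sqrt (deg u) = s * α := by
    have hα : α = (∑ u ∈ S, x u * Real.sqrt (deg u)) / s := by
      simp only [α, PiLp.inner_apply, gbarVec_apply fun u => (hdegpos u).le, RCLike.inner_apply,
        conj_trivial, ite_mul, zero_mul, sum_ite_mem, univ_inter, sum_div]
      exact sum_congr rfl fun u _ => by ring
    rw [hα, mul_div_cancel₀ _ hs.ne']
  have hterm : ∀ u, deg u * (x u / Real.sqrt (deg u) - α / s) ^ 2 =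
      x u ^ 2 - 2 * (α / s) * (x u * Real.sqrt (deg u)) + (α / s) ^ 2 * deg u := fun u => by
    have hd := Real.sq_sqrt (hdegpos u).le
    have hx : Real.sqrt (deg u) * (x u / Real.sqrt (deg u)) = x u :=
      mul_div_cancel₀ _ (Real.sqrt_pos.mpr (hdegpos u)).ne'
    linear_combination (Real.sqrt (deg u) * (x u / Real.sqrt (deg u)) + x u -
        2 * (α / s) * Real.sqrt (deg u)) * hx -
      ((x u / Real.sqrt (deg u)) ^ 2 - 2 * (α / s) * (x u / Real.sqrt (deg u))) * hd
  rw [sum_congr rfl fun u _ => hterm u, sum_add_distrib, sum_sub_distrib, ← mul_sum, hcorr,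
    ← mul_sum, hvol]
  field_simp
  ring

end IndicatorVector

section Eigenbasis

variable {ι V : Type*} [Fintype ι] [Fintype V] {N : Matrix V V ℝ}
  {b : OrthonormalBasis ι ℝ (EuclideanSpace ℝ V)} {lam : ι → ℝ}

theorem dotProduct_mulVec_eq_sum_mul_inner_sq (heig : ∀ j, N.mulVec (b j) = lam j • b j)
    (x : EuclideanSpace ℝ V) : x ⬝ᵥ N.mulVec x = ∑ j, lam j * ⟪b j, x⟫ ^ 2 := by
  have hNx : N.mulVec x = ∑ j, (⟪b j, x⟫ * lam j) • (b j : V → ℝ) := by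
    conv_lhs => rw [← b.sum_repr' x]
    simp [Matrix.mulVec_sum, Matrix.mulVec_smul, heig, smul_smul]
  rw [hNx, dotProduct_sum]
  refine sum_congr rfl fun j _ => ?_
  rw [dotProduct_smul, smul_eq_mul, EuclideanSpace.inner_eq_star_dotProduct, star_trivial]
  ring

theorem eigenvalue_eq_dotProduct_mulVec (heig : ∀ j, N.mulVec (b j) = lam j • b j) (j : ι) :
    lam j = b j ⬝ᵥ N.mulVec (b j) := by
  have hunit : ⟪b j, b j⟫ = 1 := by rw [real_inner_self_eq_norm_sq, b.orthonormal.1 j, one_pow]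
  rw [EuclideanSpace.inner_eq_star_dotProduct, star_trivial] at hunit
  rw [heig, dotProduct_smul, hunit, smul_eq_mul, mul_one]

end Eigenbasis

theorem sum_Ici_inner_gbarVec_sq_le {n : ℕ} {w : Fin n → Fin n → ℝ} {deg : Fin n → ℝ}
    (hsymm : ∀ u v, w u v = w v u) (hnonneg : ∀ u v, 0 ≤ w u v)
    (hdeg : ∀ u, deg u = ∑ v, w u v) (hdegpos : ∀ u, 0 < deg u)
    {b : OrthonormalBasis (Fin n) ℝ (EuclideanSpace ℝ (Fin n))} {lam : Fin n → ℝ}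
    (hlam : Monotone lam) (heig : ∀ j, (normalizedLaplacian w deg).mulVec (b j) = lam j • b j)
    {a : Fin n} (ha : 0 < lam a) {S : Finset (Fin n)} (hS : S.Nonempty) :
    ∑ j ∈ Ici a, ⟪b j, gbarVec deg S⟫ ^ 2 ≤ gCond w deg S / lam a := by
  have hlam0 : ∀ j, 0 ≤ lam j := fun j => by
    rw [eigenvalue_eq_dotProduct_mulVec heig j]
    exact dotProduct_normalizedLaplacian_mulVec_nonneg hsymm hnonneg hdeg hdegpos _
  calc ∑ j ∈ Ici a, ⟪b j, gbarVec deg S⟫ ^ 2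
      ≤ (∑ j, lam j * ⟪b j, gbarVec deg S⟫ ^ 2) / lam a :=
        sum_Ici_le_sum_mul_div hlam hlam0 (fun j => sq_nonneg _) ha
    _ = gCut w S Sᶜ / gVol deg S / lam a := by
        rw [← dotProduct_mulVec_eq_sum_mul_inner_sq heig,
          gbarVec_dotProduct_normalizedLaplacian_mulVec hsymm hdeg hdegpos]
    _ ≤ gCond w deg S / lam a :=
        div_le_div_of_nonneg_right (gCut_div_gVol_le_gCond hnonneg hdegpos hS) ha.le

section LeadingCoords

variable {E : Type*} [NormedAddCommGroup E] [InnerProductSpace ℝ E] {n k : ℕ} (hkn : k < n)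
  (b : OrthonormalBasis (Fin n) ℝ E)

noncomputable def leadingCoords (x : E) : EuclideanSpace ℝ (Fin k) :=
  WithLp.toLp 2 fun j => ⟪b (Fin.castLE hkn.le j), x⟫

theorem norm_leadingCoords_sq (x : E) :
    ‖leadingCoords hkn b x‖ ^ 2 = ∑ j : Fin k, ⟪b (Fin.castLE hkn.le j), x⟫ ^ 2 := by
  simp [EuclideanSpace.norm_sq_eq, leadingCoords]

theorem inner_leadingCoords_add_sum_Ici (x y : E) :
    ⟪leadingCoords hkn b x, leadingCoords hkn b y⟫ +
      ∑ j ∈ Ici ⟨k, hkn⟩, ⟪b j, x⟫ * ⟪b j, y⟫ = ⟪x, y⟫ := by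
  rw [← b.sum_inner_mul_inner x y, ← sum_castLE_add_sum_Ici hkn]
  simp [leadingCoords, PiLp.inner_apply, real_inner_comm x, mul_comm]

variable {b}

theorem one_sub_le_norm_leadingCoords_sq {x : E} (hx : ‖x‖ = 1) {ε : ℝ}
    (htail : ∑ j ∈ Ici ⟨k, hkn⟩, ⟪b j, x⟫ ^ 2 ≤ ε) : 1 - ε ≤ ‖leadingCoords hkn b x‖ ^ 2 := by
  have h := inner_leadingCoords_add_sum_Ici hkn b x x
  rw [real_inner_self_eq_norm_sq, real_inner_self_eq_norm_sq, hx] at h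
  simp only [← sq] at h
  linarith

theorem inner_leadingCoords_le {x y : E} (hxy : ⟪x, y⟫ = 0) {ε : ℝ}
    (hx : ∑ j ∈ Ici ⟨k, hkn⟩, ⟪b j, x⟫ ^ 2 ≤ ε) (hy : ∑ j ∈ Ici ⟨k, hkn⟩, ⟪b j, y⟫ ^ 2 ≤ ε) :
    ⟪leadingCoords hkn b x, leadingCoords hkn b y⟫ ≤ ε := by
  have h := inner_leadingCoords_add_sum_Ici hkn b x y
  have hε : 0 ≤ ε := (sum_nonneg fun j _ => sq_nonneg _).trans hx
  have hcs := sum_mul_sq_le_sq_mul_sq (Ici (⟨k, hkn⟩ : Fin n)) (fun j => ⟪b j, x⟫)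
    (fun j => ⟪b j, y⟫)
  have hprod : (∑ j ∈ Ici ⟨k, hkn⟩, ⟪b j, x⟫ ^ 2) * ∑ j ∈ Ici ⟨k, hkn⟩, ⟪b j, y⟫ ^ 2 ≤ ε ^ 2 := by
    rw [sq]; exact mul_le_mul hx hy (sum_nonneg fun j _ => sq_nonneg _) hε
  have habs := abs_le_of_sq_le_sq (hcs.trans hprod) hε
  linarith [neg_abs_le (∑ j ∈ Ici ⟨k, hkn⟩, ⟪b j, x⟫ * ⟪b j, y⟫)]

end LeadingCoords

section ApproximateCentres

variable {n k : ℕ} (hkn : k < n) {deg : Fin n → ℝ}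
  {b : OrthonormalBasis (Fin n) ℝ (EuclideanSpace ℝ (Fin n))} {S : Fin k → Finset (Fin n)}
  {p : Fin k → EuclideanSpace ℝ (Fin k)}

theorem mul_inv_add_inv_le_norm_sub_sq (hdegpos : ∀ u, 0 < deg u) (hS : IsPartition S)
    (hp : ∀ i j, p i j =
      ⟪b (Fin.castLE hkn.le j), gbarVec deg (S i)⟫ / Real.sqrt (gVol deg (S i)))
    {ε : ℝ} (htail : ∀ i, ∑ j ∈ Ici ⟨k, hkn⟩, ⟪b j, gbarVec deg (S i)⟫ ^ 2 ≤ ε)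
    {i i' : Fin k} (hii' : i ≠ i') :
    (1 - 2 * ε) * ((gVol deg (S i))⁻¹ + (gVol deg (S i'))⁻¹) ≤ ‖p i - p i'‖ ^ 2 := by
  have hon := orthonormal_gbarVec hdegpos hS
  have hε : 0 ≤ ε := (sum_nonneg fun j _ => sq_nonneg _).trans (htail i)
  have hpi : ∀ i, p i = (Real.sqrt (gVol deg (S i)))⁻¹ • leadingCoords hkn b (gbarVec deg (S i)) :=
    fun i => by ext j; simp [hp, leadingCoords, div_eq_inv_mul]
  have h := mul_sq_add_sq_le_norm_smul_sub_smul_sq (x := (Real.sqrt (gVol deg (S i)))⁻¹)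
    (y := (Real.sqrt (gVol deg (S i')))⁻¹) (by positivity) (by positivity) hε
    (one_sub_le_norm_leadingCoords_sq hkn (hon.1 i) (htail i))
    (one_sub_le_norm_leadingCoords_sq hkn (hon.1 i') (htail i'))
    (inner_leadingCoords_le hkn (hon.2 hii') (htail i) (htail i'))
  rwa [inv_pow, inv_pow, Real.sq_sqrt (gVol_pos hdegpos (hS.1 i)).le,
    Real.sq_sqrt (gVol_pos hdegpos (hS.1 i')).le, ← hpi, ← hpi] at h

theorem sum_deg_mul_norm_sub_sq_eq (hdegpos : ∀ u, 0 < deg u) (hS : IsPartition S)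
    {l : Fin n → Fin k} (hl : ∀ u i, u ∈ S i ↔ l u = i) {F : Fin n → EuclideanSpace ℝ (Fin k)}
    (hF : ∀ u j, F u j = b (Fin.castLE hkn.le j) u / Real.sqrt (deg u))
    (hp : ∀ i j, p i j =
      ⟪b (Fin.castLE hkn.le j), gbarVec deg (S i)⟫ / Real.sqrt (gVol deg (S i))) :
    ∑ u, deg u * ‖F u - p (l u)‖ ^ 2 =
      k - ∑ i, ‖leadingCoords hkn b (gbarVec deg (S i))‖ ^ 2 := by
  have hunit : ∀ j : Fin k, ∑ i, ∑ u ∈ S i, b (Fin.castLE hkn.le j) u ^ 2 = 1 := fun j => by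
    rw [sum_sum_eq_sum_label hl fun _ u => b (Fin.castLE hkn.le j) u ^ 2]
    have h := EuclideanSpace.norm_sq_eq (b (Fin.castLE hkn.le j))
    rw [b.orthonormal.1, one_pow] at h
    simpa using h.symm
  calc ∑ u, deg u * ‖F u - p (l u)‖ ^ 2 = ∑ i, ∑ u ∈ S i, deg u * ‖F u - p i‖ ^ 2 :=
        (sum_sum_eq_sum_label hl fun i u => deg u * ‖F u - p i‖ ^ 2).symm
    _ = ∑ i, ∑ j : Fin k, ∑ u ∈ S i, deg u * (b (Fin.castLE hkn.le j) u / Real.sqrt (deg u) -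
          ⟪b (Fin.castLE hkn.le j), gbarVec deg (S i)⟫ / Real.sqrt (gVol deg (S i))) ^ 2 := by
        refine sum_congr rfl fun i _ => ?_
        rw [sum_comm]
        refine sum_congr rfl fun u _ => ?_
        simp [EuclideanSpace.norm_sq_eq, mul_sum, hF, hp]
    _ = ∑ i, ∑ j : Fin k, (∑ u ∈ S i, b (Fin.castLE hkn.le j) u ^ 2 -
          ⟪b (Fin.castLE hkn.le j), gbarVec deg (S i)⟫ ^ 2) := by
        simp_rw [sum_deg_mul_sub_sq_eq hdegpos (hS.1 _)]
    _ = k - ∑ i, ‖leadingCoords hkn b (gbarVec deg (S i))‖ ^ 2 := by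
        simp_rw [sum_sub_distrib, norm_leadingCoords_sq]
        rw [sum_comm, sum_congr rfl fun j _ => hunit j]
        simp

theorem sum_deg_mul_norm_sub_sq_le (hdegpos : ∀ u, 0 < deg u)
    (hS : IsPartition S) {l : Fin n → Fin k} (hl : ∀ u i, u ∈ S i ↔ l u = i)
    {F : Fin n → EuclideanSpace ℝ (Fin k)}
    (hF : ∀ u j, F u j = b (Fin.castLE hkn.le j) u / Real.sqrt (deg u))
    (hp : ∀ i j, p i j =
      ⟪b (Fin.castLE hkn.le j), gbarVec deg (S i)⟫ / Real.sqrt (gVol deg (S i)))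
    {ε : ℝ} (htail : ∀ i, ∑ j ∈ Ici ⟨k, hkn⟩, ⟪b j, gbarVec deg (S i)⟫ ^ 2 ≤ ε) :
    ∑ u, deg u * ‖F u - p (l u)‖ ^ 2 ≤ k * ε := by
  have hon := orthonormal_gbarVec hdegpos hS
  have hlead := sum_le_sum fun i (_ : i ∈ univ) =>
    one_sub_le_norm_leadingCoords_sq hkn (hon.1 i) (htail i)
  rw [sum_deg_mul_norm_sub_sq_eq hkn hdegpos hS hl hF hp]
  simp only [sum_const, card_univ, Fintype.card_fin, nsmul_eq_mul] at hlead
  linarith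

end ApproximateCentres

theorem sigma_misclassification_bound_general
    {n k : ℕ} (hkn : k < n)
    (w : Fin n → Fin n → ℝ)
    (hsymm : ∀ u v, w u v = w v u)
    (hnonneg : ∀ u v, 0 ≤ w u v)
    (deg : Fin n → ℝ) (hdeg : ∀ u, deg u = ∑ v, w u v)
    (hdegpos : ∀ u, 0 < deg u)
    -- the normalised Laplacian `N = I - D^{-1/2} A D^{-1/2}`
    (N : Matrix (Fin n) (Fin n) ℝ)
    (hN : ∀ u v, N u v =
      (if u = v then (1 : ℝ) else 0) - w u v / (Real.sqrt (deg u) * Real.sqrt (deg v)))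
    -- its eigenvalues `lam 0 ≤ … ≤ lam (n-1)` with orthonormal eigenvectors `f`
    (lam : Fin n → ℝ) (hlam : Monotone lam)
    (f : Fin n → EuclideanSpace ℝ (Fin n))
    (hf : Orthonormal ℝ f)
    (heig : ∀ i, N.mulVec (f i) = lam i • (f i))
    -- `S` is a partition attaining the `k`-way expansion `ρ(k)`
    (S : Fin k → Finset (Fin n)) (hS : IsPartition S)
    (rho : ℝ)
    (hrho : rho = ⨆ i, gCond w deg (S i))
    (hlampos : 0 < lam ⟨k, hkn⟩)
    -- `Υ(k) = λ_{k+1} / ρ(k)`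
    (Upsilon : ℝ) (hU : Upsilon = lam ⟨k, hkn⟩ / rho)
    -- the normalised indicator vectors of the clusters
    (gbar : Fin k → EuclideanSpace ℝ (Fin n))
    (hgbar : ∀ i, gbar i = gbarVec deg (S i))
    -- the spectral embedding `F(u) = (f_1(u), …, f_k(u))/√deg(u)`
    (F : Fin n → EuclideanSpace ℝ (Fin k))
    (hF : ∀ u j, F u j = f (Fin.castLE hkn.le j) u / Real.sqrt (deg u))
    -- the approximate cluster centres `p^(i)(j) = ⟨f_j, ḡ_i⟩ / √vol(S_i)`
    (p : Fin k → EuclideanSpace ℝ (Fin k))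
    (hp : ∀ i j, p i j = ⟪f (Fin.castLE hkn.le j), gbar i⟫ / Real.sqrt (gVol deg (S i)))
    (APT : ℝ) (hAPT : 1 ≤ APT)
    (hU32 : 32 ≤ Upsilon)
    -- `A` is a partition of `V` with k-means cost at most `APT·k/Υ(k)`
    (A : Fin k → Finset (Fin n)) (hA : IsPartition A)
    (c : Fin k → EuclideanSpace ℝ (Fin k))
    (hc : ∀ i, c i = kmCentre deg F (A i))
    (hcost : kmCost deg F A ≤ APT * k / Upsilon)
    -- `σ(i)` minimises the distance from `c i` to the approximate centres
    (sigma : Fin k → Fin k)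
    (hsigma : ∀ i j, ‖p (sigma i) - c i‖ ≤ ‖p j - c i‖)
    -- `M_{σ,i}` is the union of the clusters mapped to `i`
    (M : Fin k → Finset (Fin n))
    (hM : ∀ i, M i = (Finset.univ.filter (fun j => sigma j = i)).biUnion A) :
    ∑ i : Fin k, gVol deg (symmDiff (M i) (S i)) / gVol deg (S i) ≤
      64 * (1 + APT) * k / Upsilon := by
  obtain ⟨f, rfl⟩ := hf.exists_orthonormalBasis_eq (by simp)
  obtain rfl : N = normalizedLaplacian w deg := Matrix.ext hN
  simp only [hgbar] at hp
  obtain ⟨lS, hlS⟩ := hS.exists_label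
  obtain ⟨lA, hlA⟩ := hA.exists_label
  have hε : Upsilon⁻¹ ≤ 1 / 4 := by rw [one_div]; exact inv_anti₀ (by norm_num) (by linarith)
  have htail : ∀ i, ∑ j ∈ Ici ⟨k, hkn⟩, ⟪f j, gbarVec deg (S i)⟫ ^ 2 ≤ Upsilon⁻¹ := fun i => by
    refine (sum_Ici_inner_gbarVec_sq_le hsymm hnonneg hdeg hdegpos hlam heig hlampos
      (hS.1 i)).trans ?_
    rw [hU, inv_div, hrho]
    exact div_le_div_of_nonneg_right
      (le_ciSup (f := fun i => gCond w deg (S i)) (Set.finite_range _).bddAbove i) hlampos.le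
  have hkm : ∑ u, deg u * ‖F u - c (lA u)‖ ^ 2 ≤ APT * k / Upsilon := by
    rw [← sum_sum_eq_sum_label hlA fun i u => deg u * ‖F u - c i‖ ^ 2]
    simpa [hc, kmCost] using hcost
  calc ∑ i, gVol deg (symmDiff (M i) (S i)) / gVol deg (S i)
      ≤ 16 * (APT * k / Upsilon + k * Upsilon⁻¹) := by
        refine (sum_vol_symmDiff_div_le_of_separated (fun u => (hdegpos u).le) hε
          (fun i j => mul_inv_add_inv_le_norm_sub_sq hkn hdegpos hS hp htail) hsigma hlA hlS hM
          F).trans ?_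
        gcongr
        exact sum_deg_mul_norm_sub_sq_le hkn hdegpos hS hlS hF hp htail
    _ ≤ 64 * (1 + APT) * k / Upsilon := by
        have hkε : 0 ≤ (k : ℝ) * Upsilon⁻¹ := by
          have : 0 < Upsilon := by linarith
          positivity
        rw [div_eq_mul_inv, div_eq_mul_inv]
        nlinarith

/-- Misclassification bound for the mapping σ (Lemma 4.9). -/
theorem sigma_misclassification_bound
    {n k : ℕ} (hk : 0 < k) (hkn : k < n)
    (w : Fin n → Fin n → ℝ)
    (hsymm : ∀ u v, w u v = w v u)
    (hnonneg : ∀ u v, 0 ≤ w u v)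
    (deg : Fin n → ℝ) (hdeg : ∀ u, deg u = ∑ v, w u v)
    (hdegpos : ∀ u, 0 < deg u)
    -- the normalised Laplacian `N = I - D^{-1/2} A D^{-1/2}`
    (N : Matrix (Fin n) (Fin n) ℝ)
    (hN : ∀ u v, N u v =
      (if u = v then (1 : ℝ) else 0) - w u v / (Real.sqrt (deg u) * Real.sqrt (deg v)))
    -- its eigenvalues `lam 0 ≤ … ≤ lam (n-1)` with orthonormal eigenvectors `f`
    (lam : Fin n → ℝ) (hlam : Monotone lam)
    (f : Fin n → EuclideanSpace ℝ (Fin n))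
    (hf : Orthonormal ℝ f)
    (heig : ∀ i, N.mulVec (f i) = lam i • (f i))
    -- `S` is a partition attaining the `k`-way expansion `ρ(k)`
    (S : Fin k → Finset (Fin n)) (hS : IsPartition S)
    (rho : ℝ)
    (hrho : rho = ⨆ i, gCond w deg (S i))
    (hopt : ∀ T : Fin k → Finset (Fin n), IsPartition T → rho ≤ ⨆ i, gCond w deg (T i))
    (hrhopos : 0 < rho)
    (hlampos : 0 < lam ⟨k, hkn⟩)
    -- `Υ(k) = λ_{k+1} / ρ(k)`
    (Upsilon : ℝ) (hU : Upsilon = lam ⟨k, hkn⟩ / rho)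
    -- the normalised indicator vectors of the clusters
    (gbar : Fin k → EuclideanSpace ℝ (Fin n))
    (hgbar : ∀ i, gbar i = gbarVec deg (S i))
    -- the spectral embedding `F(u) = (f_1(u), …, f_k(u))/√deg(u)`
    (F : Fin n → EuclideanSpace ℝ (Fin k))
    (hF : ∀ u j, F u j = f (Fin.castLE hkn.le j) u / Real.sqrt (deg u))
    -- the approximate cluster centres `p^(i)(j) = ⟨f_j, ḡ_i⟩ / √vol(S_i)`
    (p : Fin k → EuclideanSpace ℝ (Fin k))
    (hp : ∀ i j, p i j = ⟪f (Fin.castLE hkn.le j), gbar i⟫ / Real.sqrt (gVol deg (S i)))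
    (APT : ℝ) (hAPT : 1 ≤ APT)
    (hU32 : 32 ≤ Upsilon)
    -- `A` is a partition of `V` with k-means cost at most `APT·k/Υ(k)`
    (A : Fin k → Finset (Fin n)) (hA : IsPartition A)
    (c : Fin k → EuclideanSpace ℝ (Fin k))
    (hc : ∀ i, c i = kmCentre deg F (A i))
    (hcost : kmCost deg F A ≤ APT * k / Upsilon)
    -- `σ(i)` minimises the distance from `c i` to the approximate centres
    (sigma : Fin k → Fin k)
    (hsigma : ∀ i j, ‖p (sigma i) - c i‖ ≤ ‖p j - c i‖)
    -- `M_{σ,i}` is the union of the clusters mapped to `i`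
    (M : Fin k → Finset (Fin n))
    (hM : ∀ i, M i = (Finset.univ.filter (fun j => sigma j = i)).biUnion A) :
    ∑ i : Fin k, gVol deg (symmDiff (M i) (S i)) / gVol deg (S i) ≤
      64 * (1 + APT) * k / Upsilon :=
  sigma_misclassification_bound_general hkn w hsymm hnonneg deg hdeg hdegpos N hN lam hlam f hf heig
    S hS rho hrho hlampos Upsilon hU gbar hgbar F hF p hp APT hAPT hU32 A hA c hc hcost sigma hsigma
    M hM
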